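/- Let n ≥ 3, let Ω ⊂ ℝⁿ be a nonempty open bounded set, m > 0, and f : Ω × ℝ × ℝⁿ → ℝ a continuous function with |f(x,s,y)| ≤ m for all (x,s,y). Let f_∞ : Ω → ℝ be a continuous function such that, for every x ∈ Ω, f(x,s,y)·s → f_∞(x) as |s| → +∞, uniformly with respect to y ∈ ℝⁿ. Assume the strong resonance condition (SR1): there exists h ∈ L¹(Ω) with f(x,s,y)·s ≥ h(x) for all (x,s,y) ∈ Ω × ℝ × ℝⁿ, and ∫_Ω f_∞(x) dx > 0. Let X₀ be a finite-dimensional subspace of L²(Ω) such that every nonzero ū ∈ X₀ is nonzero almost everywhere (i.e. the set {x ∈ Ω : ū(x) = 0} has Lebesgue measure zero). Then for every M > 0 there exists R > 0 such that for every measurable w : Ω → ℝ with |w(x)| ≤ M for almost every x ∈ Ω, every measurable y : Ω → ℝⁿ, and every ū ∈ X₀ with ‖ū‖_{L²(Ω)} ≥ R, one has ∫_Ω f(x, w(x) + ū(x), y(x)) · ū(x) dx > 0. -/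

import Mathlib

/-!
Argue by contradiction: otherwise there are `w_k`, `y_k` and `u_k ∈ X₀` with `‖u_k‖ → ∞` and
`∫ f(x, w_k + u_k, y_k) u_k ≤ 0`. Since `X₀` is finite-dimensional, a subsequence of
`u_k / ‖u_k‖` converges in `L²`, hence a.e. along a further subsequence, to some `v ≠ 0`;
as `v` vanishes only on a null set, `|u_k(x)| → ∞` for a.e. `x`. Since `f(x, s, y) s → f_∞(x)`
and `w_k` is bounded, the integrands tend to `f_∞(x)` a.e., and they are bounded below by the
integrable function `h - m M`. Fatou's lemma then gives `∫ f_∞ ≤ 0`, contradicting (SR1).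
-/

open MeasureTheory Filter Topology
open scoped ENNReal

lemma TendstoUniformly.tendsto_apply_of_const {ι κ Y β : Type*} [UniformSpace β]
    {F : ι → Y → β} {c : β} {p : Filter ι} {l : Filter κ}
    (hF : TendstoUniformly F (fun _ => c) p) {s : κ → ι} (hs : Tendsto s l p) (y : κ → Y) :
    Tendsto (fun j => F (s j) (y j)) l (𝓝 c) :=
  Uniform.tendsto_nhds_right.2 fun U hU => (hs.eventually (hF U hU)).mono fun _ hj => hj (y _)

lemma tendsto_mul_of_tendstoUniformly_mul_self {ι Y : Type*} {l : Filter ι} {g : ℝ → Y → ℝ}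
    {L M : ℝ} (hg : TendstoUniformly (fun s y => g s y * s) (fun _ => L) (atBot ⊔ atTop))
    {a b : ι → ℝ} (ha : ∀ j, |a j| ≤ M) (hb : Tendsto (fun j => |b j|) l atTop) (y : ι → Y) :
    Tendsto (fun j => g (a j + b j) (y j) * b j) l (𝓝 L) := by
  set s := fun j => a j + b j
  have hs : Tendsto (fun j => |s j|) l atTop := by
    refine tendsto_atTop_mono (fun j => ?_) (tendsto_atTop_add_const_right _ (-M) hb)
    have : |b j| ≤ |s j| + |a j| := by simpa [s] using abs_sub (a j + b j) (a j)
    linarith [ha j]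
  have hgs : Tendsto (fun j => g (s j) (y j) * s j) l (𝓝 L) :=
    hg.tendsto_apply_of_const (by rw [← comap_abs_atTop]; exact tendsto_comap_iff.2 hs) y
  have has : Tendsto (fun j => a j * (s j)⁻¹) l (𝓝 0) := by
    refine squeeze_zero_norm (fun j => ?_) (by simpa using hs.inv_tendsto_atTop.const_mul M)
    rw [norm_mul, norm_inv, Real.norm_eq_abs, Real.norm_eq_abs]
    exact mul_le_mul_of_nonneg_right (ha j) (inv_nonneg.2 (abs_nonneg _))
  -- with `s = a + b`, `g(s) b = g(s) s · (1 - a / s)` and `a / s → 0`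
  have hlim := hgs.mul ((tendsto_const_nhds (x := (1 : ℝ))).sub has)
  rw [sub_zero, mul_one] at hlim
  refine hlim.congr' ((hs.eventually_gt_atTop 0).mono fun j hj => ?_)
  have hsj : s j ≠ 0 := abs_pos.1 hj
  simp only [s] at hsj ⊢
  field_simp
  ring

lemma exists_subseq_tendsto_inv_norm_smul {E : Type*} [NormedAddCommGroup E] [NormedSpace ℝ E]
    [ProperSpace E] {u : ℕ → E} (hu : Tendsto (fun k => ‖u k‖) atTop atTop) :
    ∃ v : E, ‖v‖ = 1 ∧ ∃ φ : ℕ → ℕ, StrictMono φ ∧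
      Tendsto (fun j => ‖u (φ j)‖⁻¹ • u (φ j)) atTop (𝓝 v) := by
  have hsphere : ∃ᶠ k in atTop, ‖u k‖⁻¹ • u k ∈ Metric.sphere (0 : E) 1 :=
    ((hu.eventually_gt_atTop 0).mono fun k hk => by
      simpa using norm_smul_inv_norm (𝕜 := ℝ) (norm_pos_iff.1 hk)).frequently
  obtain ⟨v, hv, φ, hφ, hlim⟩ := (isCompact_sphere (0 : E) 1).tendsto_subseq' hsphere
  exact ⟨v, by simpa using hv, φ, hφ, hlim⟩

lemma exists_subseq_abs_tendsto_atTop_ae {α : Type*} [MeasurableSpace α] {μ : Measure α}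
    {p : ℝ≥0∞} [Fact (1 ≤ p)] {X₀ : Submodule ℝ (Lp ℝ p μ)} [FiniteDimensional ℝ X₀]
    (hker : ∀ v ∈ X₀, v ≠ 0 → ∀ᵐ x ∂μ, v x ≠ 0) {u : ℕ → Lp ℝ p μ} (huX : ∀ k, u k ∈ X₀)
    (hu : Tendsto (fun k => ‖u k‖) atTop atTop) :
    ∃ φ : ℕ → ℕ, StrictMono φ ∧ ∀ᵐ x ∂μ, Tendsto (fun j => |u (φ j) x|) atTop atTop := by
  obtain ⟨v, hv, φ, hφ, hlim⟩ :=
    exists_subseq_tendsto_inv_norm_smul (u := fun k => (⟨u k, huX k⟩ : X₀)) hu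
  have hlimLp : Tendsto (fun j => ‖u (φ j)‖⁻¹ • u (φ j)) atTop (𝓝 (v : Lp ℝ p μ)) :=
    (continuous_subtype_val.tendsto v).comp hlim
  obtain ⟨ψ, hψ, hae⟩ := (tendstoInMeasure_of_tendsto_Lp hlimLp).exists_seq_tendsto_ae
  have hv0 : (v : Lp ℝ p μ) ≠ 0 := fun h0 => by simp [Submodule.coe_eq_zero.1 h0] at hv
  have hsmul : ∀ᵐ x ∂μ, ∀ k, (‖u k‖⁻¹ • u k) x = ‖u k‖⁻¹ * u k x :=
    ae_all_iff.2 fun k => Lp.coeFn_smul _ (u k)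
  refine ⟨φ ∘ ψ, hφ.comp hψ, ?_⟩
  filter_upwards [hker v v.2 hv0, hae, hsmul] with x hvx hx hsmulx
  have hnorm : Tendsto (fun j => ‖u (φ (ψ j))‖) atTop atTop :=
    hu.comp (hφ.comp hψ).tendsto_atTop
  refine (hnorm.atTop_mul_pos (abs_pos.2 hvx) hx.abs).congr' ?_
  filter_upwards [hnorm.eventually_gt_atTop 0] with j hj
  simp only [Function.comp_apply, hsmulx, abs_mul, abs_inv, abs_norm]
  field_simp

lemma integral_le_of_tendsto_ae_of_integral_le {α : Type*} [MeasurableSpace α] {μ : Measure α}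
    {G : ℕ → α → ℝ} {g φ : α → ℝ} {c : ℝ} (hG : ∀ k, Integrable (G k) μ) (hφ : Integrable φ μ)
    (hg : Integrable g μ) (hφG : ∀ k, φ ≤ᵐ[μ] G k)
    (hlim : ∀ᵐ x ∂μ, Tendsto (fun k => G k x) atTop (𝓝 (g x)))
    (hc : ∀ k, ∫ x, G k x ∂μ ≤ c) : ∫ x, g x ∂μ ≤ c := by
  have hGφ : ∀ k, Integrable (fun x => G k x - φ x) μ := fun k => (hG k).sub hφ
  have hGφ_nonneg : ∀ k, 0 ≤ᵐ[μ] fun x => G k x - φ x :=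
    fun k => (hφG k).mono fun x hx => sub_nonneg.2 hx
  have hgφ_nonneg : 0 ≤ᵐ[μ] fun x => g x - φ x := by
    filter_upwards [hlim, ae_all_iff.2 hφG] with x hx hφx
    exact sub_nonneg.2 (ge_of_tendsto' hx hφx)
  have hcφ : 0 ≤ c - ∫ x, φ x ∂μ :=
    sub_nonneg.2 ((integral_mono_ae hφ (hG 0) (hφG 0)).trans (hc 0))
  have hfatou : ENNReal.ofReal (∫ x, g x - φ x ∂μ) ≤ ENNReal.ofReal (c - ∫ x, φ x ∂μ) :=
    calc ENNReal.ofReal (∫ x, g x - φ x ∂μ)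
        = ∫⁻ x, ENNReal.ofReal (g x - φ x) ∂μ :=
          ofReal_integral_eq_lintegral_ofReal (hg.sub hφ) hgφ_nonneg
      _ = ∫⁻ x, liminf (fun k => ENNReal.ofReal (G k x - φ x)) atTop ∂μ := by
          refine lintegral_congr_ae (hlim.mono fun x hx => ?_)
          exact ((ENNReal.tendsto_ofReal (hx.sub_const (φ x))).liminf_eq).symm
      _ ≤ liminf (fun k => ∫⁻ x, ENNReal.ofReal (G k x - φ x) ∂μ) atTop :=
          lintegral_liminf_le' fun k => (hGφ k).aemeasurable.ennreal_ofReal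
      _ ≤ ENNReal.ofReal (c - ∫ x, φ x ∂μ) := by
          refine liminf_le_of_frequently_le' (Frequently.of_forall fun k => ?_)
          rw [← ofReal_integral_eq_lintegral_ofReal (hGφ k) (hGφ_nonneg k),
            integral_sub (hG k) hφ]
          exact ENNReal.ofReal_le_ofReal (by linarith [hc k])
  rw [ENNReal.ofReal_le_ofReal_iff hcφ, integral_sub hg hφ] at hfatou
  linarith

lemma ContinuousOn.aemeasurable_comp_prodMk {α β γ : Type*} [TopologicalSpace α]
    [MeasurableSpace α] [TopologicalSpace β] [MeasurableSpace β] [TopologicalSpace γ]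
    [MeasurableSpace γ] [BorelSpace γ] [OpensMeasurableSpace (α × β)] {μ : Measure α}
    {F : α × β → γ} {s : Set α} (hF : ContinuousOn F (s ×ˢ Set.univ)) (hs : MeasurableSet s)
    {g : α → β} (hg : AEMeasurable g (μ.restrict s)) :
    AEMeasurable (fun x => F (x, g x)) (μ.restrict s) := by
  have hp : AEMeasurable (fun x => (x, g x)) (μ.restrict s) := aemeasurable_id.prodMk hg
  have hmem : ∀ᵐ q ∂(μ.restrict s).map (fun x => (x, g x)), q ∈ s ×ˢ Set.univ := by
    refine (ae_map_iff hp (hs.prod .univ)).2 ?_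
    filter_upwards [ae_restrict_mem hs] with x hx using ⟨hx, trivial⟩
  refine AEMeasurable.comp_aemeasurable ?_ hp
  rw [← Measure.restrict_eq_self_of_ae_mem hmem]
  exact hF.aemeasurable (hs.prod .univ)

lemma integrable_mul_of_continuousOn_of_abs_le {α Y : Type*} [TopologicalSpace α]
    [MeasurableSpace α] [TopologicalSpace Y] [MeasurableSpace Y]
    [OpensMeasurableSpace (α × ℝ × Y)] {μ : Measure α} {s : Set α} (hs : MeasurableSet s)
    {f : α → ℝ → Y → ℝ} (hf : ContinuousOn (fun p : α × ℝ × Y => f p.1 p.2.1 p.2.2) (s ×ˢ Set.univ))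
    {m : ℝ} (hfb : ∀ x ∈ s, ∀ t y, |f x t y| ≤ m) {v : α → ℝ} (hv : AEMeasurable v (μ.restrict s))
    {y : α → Y} (hy : AEMeasurable y (μ.restrict s)) {u : α → ℝ}
    (hu : Integrable u (μ.restrict s)) :
    Integrable (fun x => f x (v x) (y x) * u x) (μ.restrict s) := by
  have hf_meas := hf.aemeasurable_comp_prodMk hs (hv.prodMk hy)
  refine (hu.abs.const_mul m).mono' (hf_meas.mul hu.aemeasurable).aestronglyMeasurable ?_
  filter_upwards [ae_restrict_mem hs] with x hx
  rw [Real.norm_eq_abs, abs_mul]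
  exact mul_le_mul_of_nonneg_right (hfb x hx _ _) (abs_nonneg _)

lemma sub_mul_le_mul_of_le_mul_add {h F w u m M : ℝ} (hh : h ≤ F * (w + u)) (hF : |F| ≤ m)
    (hw : |w| ≤ M) : h - m * M ≤ F * u := by
  have hFw : |F * w| ≤ m * M := by
    rw [abs_mul]
    exact mul_le_mul hF hw (abs_nonneg _) ((abs_nonneg _).trans hF)
  linarith [le_abs_self (F * w), mul_add F w u]

theorem stmt_7_general
    {n : ℕ} (Ω : Set (Fin n → ℝ)) (hΩo : IsOpen Ω)
    (hΩb : Bornology.IsBounded Ω)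
    (m : ℝ)
    (f : (Fin n → ℝ) → ℝ → (Fin n → ℝ) → ℝ)
    (hf : ContinuousOn (fun p : (Fin n → ℝ) × ℝ × (Fin n → ℝ) => f p.1 p.2.1 p.2.2)
      (Ω ×ˢ (Set.univ : Set (ℝ × (Fin n → ℝ)))))
    (hfb : ∀ x ∈ Ω, ∀ (s : ℝ) (y : Fin n → ℝ), |f x s y| ≤ m)
    (finf : (Fin n → ℝ) → ℝ)
    (hlim : ∀ x ∈ Ω, TendstoUniformly (fun (s : ℝ) (y : Fin n → ℝ) => f x s y * s)
      (fun _ => finf x) (atBot ⊔ atTop))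
    (hSR1 : ∃ h : (Fin n → ℝ) → ℝ, Integrable h (volume.restrict Ω) ∧
      (∀ x ∈ Ω, ∀ (s : ℝ) (y : Fin n → ℝ), h x ≤ f x s y * s) ∧
      0 < ∫ x, finf x ∂(volume.restrict Ω))
    (X₀ : Submodule ℝ (Lp ℝ 2 (volume.restrict Ω))) (hX₀ : FiniteDimensional ℝ X₀)
    (hker : ∀ u : Lp ℝ 2 (volume.restrict Ω), u ∈ X₀ → u ≠ 0 →
      volume {x ∈ Ω | u x = 0} = 0) :
    ∀ M : ℝ, 0 < M → ∃ R : ℝ, 0 < R ∧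
      ∀ w : (Fin n → ℝ) → ℝ, Measurable w →
        (∀ᵐ x ∂(volume.restrict Ω), |w x| ≤ M) →
      ∀ y : (Fin n → ℝ) → (Fin n → ℝ), Measurable y →
      ∀ u : Lp ℝ 2 (volume.restrict Ω), u ∈ X₀ → R ≤ ‖u‖ →
        0 < ∫ x, f x (w x + u x) (y x) * u x ∂(volume.restrict Ω) := by
  obtain ⟨h, hh_int, hh_le, hfinf_pos⟩ := hSR1
  have : IsFiniteMeasure (volume.restrict Ω) := isFiniteMeasure_restrict.2 hΩb.measure_lt_top.ne
  have hΩ : ∀ᵐ x ∂volume.restrict Ω, x ∈ Ω := ae_restrict_mem hΩo.measurableSet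
  have hker_ae : ∀ v ∈ X₀, v ≠ 0 → ∀ᵐ x ∂volume.restrict Ω, v x ≠ 0 := fun v hv hv0 =>
    (ae_restrict_iff' hΩo.measurableSet).2 (ae_iff.2 (by simpa using hker v hv hv0))
  intro M _
  by_contra! hcon
  choose w hw hwM y hy u huX hunorm hint using fun k : ℕ => hcon ((k : ℝ) + 1) (by positivity)
  set G := fun k x => f x (w k x + u k x) (y k x) * u k x
  have hu : Tendsto (fun k => ‖u k‖) atTop atTop :=
    tendsto_atTop_mono hunorm (tendsto_atTop_add_const_right _ 1 tendsto_natCast_atTop_atTop)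
  obtain ⟨φ, -, hφ⟩ := exists_subseq_abs_tendsto_atTop_ae hker_ae huX hu
  have hwM' : ∀ᵐ x ∂volume.restrict Ω, ∀ k, |w k x| ≤ M := ae_all_iff.2 hwM
  have hGlim : ∀ᵐ x ∂volume.restrict Ω, Tendsto (fun j => G (φ j) x) atTop (𝓝 (finf x)) := by
    filter_upwards [hΩ, hφ, hwM'] with x hx hux hwx
    exact tendsto_mul_of_tendstoUniformly_mul_self (hlim x hx) (fun j => hwx (φ j)) hux _
  have hGlb : ∀ k, (fun x => h x - m * M) ≤ᵐ[volume.restrict Ω] G k := fun k => by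
    filter_upwards [hΩ, hwM'] with x hx hwx
    exact sub_mul_le_mul_of_le_mul_add (hh_le x hx _ _) (hfb x hx _ _) (hwx k)
  have hGint : ∀ k, Integrable (G k) (volume.restrict Ω) := fun k =>
    integrable_mul_of_continuousOn_of_abs_le hΩo.measurableSet hf hfb
      ((hw k).aemeasurable.add (Lp.aestronglyMeasurable (u k)).aemeasurable)
      (hy k).aemeasurable ((Lp.memLp (u k)).integrable one_le_two)
  have hfinf_le : ∫ x, finf x ∂volume.restrict Ω ≤ 0 :=
    integral_le_of_tendsto_ae_of_integral_le (fun j => hGint (φ j))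
      (hh_int.sub (integrable_const _)) (.of_integral_ne_zero hfinf_pos.ne')
      (fun j => hGlb (φ j)) hGlim (fun j => hint (φ j))
  exact hfinf_le.not_gt hfinf_pos

/-- Theorem 4.4(i) of the paper: the strong resonance condition (SR1) implies the
geometric condition (G1) for the Niemytzki operator. -/
theorem stmt_7
    {n : ℕ} (hn : 3 ≤ n) (Ω : Set (Fin n → ℝ)) (hΩne : Ω.Nonempty) (hΩo : IsOpen Ω)
    (hΩb : Bornology.IsBounded Ω)
    (m : ℝ) (hm : 0 < m)
    (f : (Fin n → ℝ) → ℝ → (Fin n → ℝ) → ℝ)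
    (hf : ContinuousOn (fun p : (Fin n → ℝ) × ℝ × (Fin n → ℝ) => f p.1 p.2.1 p.2.2)
      (Ω ×ˢ (Set.univ : Set (ℝ × (Fin n → ℝ)))))
    (hfb : ∀ x ∈ Ω, ∀ (s : ℝ) (y : Fin n → ℝ), |f x s y| ≤ m)
    (finf : (Fin n → ℝ) → ℝ) (hfinfc : ContinuousOn finf Ω)
    (hlim : ∀ x ∈ Ω, TendstoUniformly (fun (s : ℝ) (y : Fin n → ℝ) => f x s y * s)
      (fun _ => finf x) (atBot ⊔ atTop))
    (hSR1 : ∃ h : (Fin n → ℝ) → ℝ, Integrable h (volume.restrict Ω) ∧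
      (∀ x ∈ Ω, ∀ (s : ℝ) (y : Fin n → ℝ), h x ≤ f x s y * s) ∧
      0 < ∫ x, finf x ∂(volume.restrict Ω))
    (X₀ : Submodule ℝ (Lp ℝ 2 (volume.restrict Ω))) (hX₀ : FiniteDimensional ℝ X₀)
    (hker : ∀ u : Lp ℝ 2 (volume.restrict Ω), u ∈ X₀ → u ≠ 0 →
      volume {x ∈ Ω | u x = 0} = 0) :
    ∀ M : ℝ, 0 < M → ∃ R : ℝ, 0 < R ∧
      ∀ w : (Fin n → ℝ) → ℝ, Measurable w →
        (∀ᵐ x ∂(volume.restrict Ω), |w x| ≤ M) →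
      ∀ y : (Fin n → ℝ) → (Fin n → ℝ), Measurable y →
      ∀ u : Lp ℝ 2 (volume.restrict Ω), u ∈ X₀ → R ≤ ‖u‖ →
        0 < ∫ x, f x (w x + u x) (y x) * u x ∂(volume.restrict Ω) :=
  stmt_7_general Ω hΩo hΩb m f hf hfb finf hlim hSR1 X₀ hX₀ hker
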